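/- With the notation and hypotheses of the context, assume in addition: (i) for every nonempty I = {i_1<⋯<i_q} and λ there is h_{I,λ} ∈ A with g_{I,λ} = (∏_{j=1}^q J(0,1,D_{i_j})) · h_{I,λ} (the Grothendieck–Riemann–Roch relation ch(ξ_{I*}Gr) = ∏_j (1 − e^{−D_{i_j}})/D_{i_j} · ξ_{I*}(ch Gr)); and (ii) c_{(η_1,…,η_n)} · exp(D) = c (the twist relation ch(E(−D)) · e^{D} = ch(E)). Then chPar = c − exp(D) · Σ_{q=1}^{n} (−1)^q Σ_{I} Σ_{λ} (∏_{j=1}^{q} J(0, 1, D_{i_j})) · h_{I,λ} + exp(D) · Σ_{q=1}^{n} (−1)^q Σ_{I} Σ_{λ} (∏_{j=1}^{q} J(0, α_{i_j}(λ_{i_j}) + 1, D_{i_j})) · h_{I,λ}. (Since J(0,β,D) is the formal value of (1 − e^{−βD})/D, this is the main theorem: ch^{Par}(E) = ch^{Vb}(E) − e^{D} Σ_q (−1)^q Σ_I Σ_λ ∏_j (1 − e^{−D_{i_j}})/D_{i_j} · ξ_{I*}(ch Gr^{I}_{λ}) + e^{D} Σ_q (−1)^q Σ_I Σ_λ ∏_j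 (1 − e^{−(α_{i_j}(λ_{i_j})+1)D_{i_j}})/D_{i_j} · ξ_{I*}(ch Gr^{I}_{λ}).) -/
import Mathlib


open scoped Classical

noncomputable section

variable {A : Type*} [CommRing A] [Algebra ℝ A]

/-- `exp x = Σ_{k ≥ 0} x^k/k!` for a nilpotent element `x`, as a finite sum (the terms with
`k ≥ nilpotencyClass x` vanish). -/
def nexp (x : A) : A :=
  ∑ m ∈ Finset.range (nilpotencyClass x), ((m.factorial : ℝ))⁻¹ • x ^ m

/-- `J(a,b,x) = Σ_{k ≥ 0} (-1)^k ((b^{k+1} - a^{k+1})/(k+1)!) x^k`, the formal value of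
`∫_a^b exp (-ρ x) dρ` for a nilpotent element `x` (a finite sum). -/
def Jf (a b : ℝ) (x : A) : A :=
  ∑ m ∈ Finset.range (nilpotencyClass x),
    ((-1 : ℝ) ^ m * ((b ^ (m + 1) - a ^ (m + 1)) / (m + 1).factorial)) • x ^ m

section Helpers
open Finset
set_option linter.unusedSectionVars false

lemma pow_eq_zero_cls {x : A} (hx : IsNilpotent x) {m : ℕ} (hm : nilpotencyClass x ≤ m) :
    x ^ m = 0 := by
  obtain ⟨k, rfl⟩ : ∃ k, m = nilpotencyClass x + k := ⟨m - nilpotencyClass x, by omega⟩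
  rw [pow_add, pow_nilpotencyClass hx, zero_mul]

lemma sum_ext {x : A} (hx : IsNilpotent x) {N : ℕ} (hN : nilpotencyClass x ≤ N) (f : ℕ → ℝ) :
    ∑ m ∈ Finset.range (nilpotencyClass x), f m • x ^ m = ∑ m ∈ Finset.range N, f m • x ^ m := by
  apply Finset.sum_subset (Finset.range_subset_range.2 hN)
  intro m _ hm
  rw [pow_eq_zero_cls hx (by simpa using hm), smul_zero]

lemma conv_mul (x y : A) (K : ℕ) (h : ∀ p q, p < K → q < K → K ≤ p + q → x ^ p * y ^ q = 0)
    (f g : ℕ → ℝ) :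
    (∑ p ∈ Finset.range K, f p • x ^ p) * (∑ q ∈ Finset.range K, g q • y ^ q) =
      ∑ m ∈ Finset.range K, ∑ j ∈ Finset.range (m + 1),
        (f j * g (m - j)) • (x ^ j * y ^ (m - j)) := by
  rw [Finset.sum_mul_sum]
  have step1 : ∀ p ∈ Finset.range K,
      ∑ q ∈ Finset.range K, (f p • x ^ p) * (g q • y ^ q)
        = ∑ q ∈ Finset.range (K - p), (f p * g q) • (x ^ p * y ^ q) := by
    intro p hp
    rw [eq_comm]
    have hterm : ∀ q, (f p • x ^ p) * (g q • y ^ q) = (f p * g q) • (x ^ p * y ^ q) := by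
      intro q; rw [smul_mul_smul_comm]
    calc ∑ q ∈ Finset.range (K - p), (f p * g q) • (x ^ p * y ^ q)
        = ∑ q ∈ Finset.range K, (f p * g q) • (x ^ p * y ^ q) := by
          apply Finset.sum_subset (Finset.range_subset_range.2 (by omega))
          intro q hq hq'
          rw [h p q (by simpa using hp) (by simpa using hq) (by simp at hq hq' ⊢; omega),
            smul_zero]
      _ = ∑ q ∈ Finset.range K, (f p • x ^ p) * (g q • y ^ q) := by
          exact Finset.sum_congr rfl fun q _ => (hterm q).symm
  rw [Finset.sum_congr rfl step1]
  rw [Finset.sum_sigma', Finset.sum_sigma']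
  refine Finset.sum_nbij' (fun z => ⟨z.1 + z.2, z.1⟩) (fun z => ⟨z.2, z.1 - z.2⟩) ?_ ?_ ?_ ?_ ?_
  · rintro ⟨p, q⟩ hz
    simp only [Finset.mem_sigma, Finset.mem_range] at hz ⊢
    omega
  · rintro ⟨m, j⟩ hz
    simp only [Finset.mem_sigma, Finset.mem_range] at hz ⊢
    omega
  · rintro ⟨p, q⟩ hz; simp
  · rintro ⟨m, j⟩ hz
    simp only [Finset.mem_sigma, Finset.mem_range] at hz
    simp only [Sigma.mk.inj_iff, heq_eq_eq]
    exact ⟨by omega, trivial⟩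
  · rintro ⟨p, q⟩ hz
    simp only [Finset.mem_sigma, Finset.mem_range] at hz
    simp

lemma nexp_zero [Nontrivial A] : nexp (0 : A) = 1 := by
  simp [nexp]

lemma nexp_mul [Nontrivial A] {x y : A} (hx : IsNilpotent x) (hy : IsNilpotent y) :
    nexp (x + y) = nexp x * nexp y := by
  have hxy : IsNilpotent (x + y) := (Commute.all x y).isNilpotent_add hx hy
  set K := nilpotencyClass x + nilpotencyClass y + nilpotencyClass (x + y) with hK
  unfold nexp
  rw [sum_ext hx (N := K) (by omega), sum_ext hy (N := K) (by omega),
    sum_ext hxy (N := K) (by omega)]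
  rw [conv_mul x y K (fun p q hp hq hpq => by
    rcases (by omega : nilpotencyClass x ≤ p ∨ nilpotencyClass y ≤ q) with h | h
    · rw [pow_eq_zero_cls hx h, zero_mul]
    · rw [pow_eq_zero_cls hy h, mul_zero])]
  refine Finset.sum_congr rfl fun m hm => ?_
  rw [add_pow, Finset.smul_sum]
  refine Finset.sum_congr rfl fun j hj => ?_
  have hj' : j ≤ m := by simpa using Nat.lt_succ_iff.mp (Finset.mem_range.mp hj)
  have hfact : ((m.choose j : ℝ)) * j.factorial * (m - j).factorial = m.factorial := by
    exact_mod_cast congrArg (Nat.cast : ℕ → ℝ) (Nat.choose_mul_factorial_mul_factorial hj')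
  have : x ^ j * y ^ (m - j) * (m.choose j : A) = (m.choose j : ℝ) • (x ^ j * y ^ (m - j)) := by
    rw [Algebra.smul_def, map_natCast, mul_comm]
  rw [this, smul_smul]
  congr 1
  have h1 : (j.factorial : ℝ) ≠ 0 := Nat.cast_ne_zero.2 j.factorial_ne_zero
  have h2 : ((m - j).factorial : ℝ) ≠ 0 := Nat.cast_ne_zero.2 (m - j).factorial_ne_zero
  have h3 : (m.factorial : ℝ) ≠ 0 := Nat.cast_ne_zero.2 m.factorial_ne_zero
  field_simp
  linear_combination hfact

lemma nexp_sum [Nontrivial A] {ι : Type*} (s : Finset ι) (f : ι → A)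
    (h : ∀ i ∈ s, IsNilpotent (f i)) :
    nexp (∑ i ∈ s, f i) = ∏ i ∈ s, nexp (f i) := by
  induction s using Finset.cons_induction with
  | empty => simpa using nexp_zero
  | cons i s his IH =>
    rw [Finset.sum_cons, Finset.prod_cons,
      nexp_mul (h i (Finset.mem_cons_self i s))
        (isNilpotent_sum fun j hj => h j (Finset.mem_cons_of_mem hj)),
      IH fun j hj => h j (Finset.mem_cons_of_mem hj)]

lemma Jf_trans (a b c : ℝ) (x : A) : Jf a b x + Jf b c x = Jf a c x := by
  unfold Jf
  rw [← Finset.sum_add_distrib]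
  refine Finset.sum_congr rfl fun m _ => ?_
  rw [← add_smul]
  congr 1
  ring

lemma real_key (b : ℝ) (m : ℕ) :
    ∑ j ∈ Finset.range (m + 1),
        (j.factorial : ℝ)⁻¹ *
          ((-1 : ℝ) ^ (m - j) * (((b + 1) ^ (m - j + 1) - (0 : ℝ) ^ (m - j + 1)) /
            (m - j + 1).factorial)) =
      (-1 : ℝ) ^ m * ((b ^ (m + 1) - (-1 : ℝ) ^ (m + 1)) / (m + 1).factorial) := by
  have hfm : ((m + 1).factorial : ℝ) ≠ 0 := Nat.cast_ne_zero.2 (m + 1).factorial_ne_zero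
  have hterm : ∀ j ∈ Finset.range (m + 1),
      (j.factorial : ℝ)⁻¹ *
          ((-1 : ℝ) ^ (m - j) * (((b + 1) ^ (m - j + 1) - (0 : ℝ) ^ (m - j + 1)) /
            (m - j + 1).factorial)) =
        (((m + 1).factorial : ℝ))⁻¹ *
          ((-1) ^ m * ((-1) ^ j * (b + 1) ^ (m + 1 - j) * ((m + 1).choose j))) := by
    intro j hj
    have hj' : j ≤ m := Nat.lt_succ_iff.mp (Finset.mem_range.mp hj)
    have e1 : m - j + 1 = m + 1 - j := by omega
    have hz : (0 : ℝ) ^ (m - j + 1) = 0 := zero_pow (Nat.succ_ne_zero _)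
    have hsign : (-1 : ℝ) ^ (m - j) = (-1) ^ m * (-1) ^ j := by
      have h1 : (-1 : ℝ) ^ (m - j) * ((-1 : ℝ) ^ j * (-1 : ℝ) ^ j) = (-1 : ℝ) ^ m * (-1) ^ j := by
        rw [← mul_assoc, ← pow_add, show m - j + j = m by omega]
      have h2 : ((-1 : ℝ) ^ j) * ((-1 : ℝ) ^ j) = 1 := by
        rw [← mul_pow]; norm_num
      rw [h2, mul_one] at h1; exact h1
    have hfact : (((m + 1).choose j : ℝ)) * j.factorial * (m + 1 - j).factorial
        = (m + 1).factorial := by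
      exact_mod_cast congrArg (Nat.cast : ℕ → ℝ)
        (Nat.choose_mul_factorial_mul_factorial (by omega : j ≤ m + 1))
    have h1 : (j.factorial : ℝ) ≠ 0 := Nat.cast_ne_zero.2 j.factorial_ne_zero
    have h2 : ((m + 1 - j).factorial : ℝ) ≠ 0 := Nat.cast_ne_zero.2 (m + 1 - j).factorial_ne_zero
    have hc : ((j.factorial : ℝ))⁻¹ * (((m + 1 - j).factorial : ℝ))⁻¹
        = (((m + 1).factorial : ℝ))⁻¹ * ((m + 1).choose j) := by
      field_simp
      linear_combination -hfact
    rw [hz, sub_zero, e1, hsign]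
    linear_combination ((-1 : ℝ) ^ m * (-1) ^ j * (b + 1) ^ (m + 1 - j)) * hc
  rw [Finset.sum_congr rfl hterm]
  rw [← Finset.mul_sum]
  have hbinom : ∑ j ∈ Finset.range (m + 1),
      ((-1 : ℝ) ^ m * ((-1) ^ j * (b + 1) ^ (m + 1 - j) * ((m + 1).choose j)))
      = (-1 : ℝ) ^ m * (b ^ (m + 1) - (-1 : ℝ) ^ (m + 1)) := by
    rw [← Finset.mul_sum]
    congr 1
    have hap := add_pow (-1 : ℝ) (b + 1) (m + 1)
    rw [Finset.sum_range_succ] at hap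
    simp only [Nat.sub_self, pow_zero, Nat.choose_self, Nat.cast_one, mul_one] at hap
    have : (-1 : ℝ) + (b + 1) = b := by ring
    rw [this] at hap
    have := hap
    -- hap : b^(m+1) = ∑_{j<m+1} (-1)^j * (b+1)^(m+1-j) * C + (-1)^(m+1)
    have hsum : ∑ j ∈ Finset.range (m + 1),
        (-1 : ℝ) ^ j * (b + 1) ^ (m + 1 - j) * ((m + 1).choose j)
        = b ^ (m + 1) - (-1 : ℝ) ^ (m + 1) := by linarith
    exact hsum
  rw [hbinom]
  field_simp

lemma Jf_shift [Nontrivial A] {x : A} (hx : IsNilpotent x) (b : ℝ) :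
    Jf (-1) b x = nexp x * Jf 0 (b + 1) x := by
  unfold nexp Jf
  rw [conv_mul x x _ (fun p q hp hq hpq => by
    rw [← pow_add]; exact pow_eq_zero_cls hx hpq)]
  rw [eq_comm]
  refine Finset.sum_congr rfl fun m hm => ?_
  have hxe : ∀ j ∈ Finset.range (m + 1),
      (((j.factorial : ℝ))⁻¹ *
        ((-1 : ℝ) ^ (m - j) * (((b + 1) ^ (m - j + 1) - (0 : ℝ) ^ (m - j + 1)) /
          (m - j + 1).factorial))) • (x ^ j * x ^ (m - j))
      = (((j.factorial : ℝ))⁻¹ *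
        ((-1 : ℝ) ^ (m - j) * (((b + 1) ^ (m - j + 1) - (0 : ℝ) ^ (m - j + 1)) /
          (m - j + 1).factorial))) • x ^ m := by
    intro j hj
    rw [← pow_add, show j + (m - j) = m by
      have := Nat.lt_succ_iff.mp (Finset.mem_range.mp hj); omega]
  rw [Finset.sum_congr rfl hxe, ← Finset.sum_smul, real_key b m]

lemma Jf_isUnit [Nontrivial A] {x : A} (hx : IsNilpotent x) : IsUnit (Jf 0 1 x) := by
  have hK : nilpotencyClass x = (nilpotencyClass x - 1) + 1 := by
    have := pos_nilpotencyClass_iff.mpr hx; omega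
  unfold Jf
  rw [hK, Finset.sum_range_succ']
  have h0 : ((-1 : ℝ) ^ 0 * (((1:ℝ) ^ (0 + 1) - (0:ℝ) ^ (0 + 1)) / ((0 + 1).factorial : ℝ))) • ((x : A) ^ 0)
      = (1 : A) := by norm_num
  rw [h0]
  have hnil : IsNilpotent (∑ j ∈ Finset.range (nilpotencyClass x - 1),
      ((-1 : ℝ) ^ (j + 1) * (((1:ℝ) ^ (j + 1 + 1) - (0:ℝ) ^ (j + 1 + 1)) /
        ((j + 1 + 1).factorial : ℝ))) • x ^ (j + 1)) := by
    apply isNilpotent_sum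
    intro j _
    exact (IsNilpotent.pow_succ j hx).smul _
  rw [add_comm]
  exact hnil.isUnit_one_add

lemma sum_le_Jf {S : Type*} [Fintype S] [LinearOrder S] (x : A)
    (αm αp : S → ℝ) (ηS : S) (hηS : ∀ s, ηS ≤ s) (hαmη : αm ηS = -1)
    (hcomp : ∀ s s' : S, s ⋖ s' → αp s = αm s') (μ : S) :
    ∑ σ ∈ Finset.univ.filter (· ≤ μ), Jf (αm σ) (αp σ) x = Jf (-1) (αp μ) x := by
  induction μ using WellFoundedLT.induction with
  | _ μ IH =>
  by_cases hmin : μ = ηS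
  · have hs : Finset.univ.filter (· ≤ μ) = {μ} := by
      ext s
      simp only [Finset.mem_filter, Finset.mem_univ, true_and, Finset.mem_singleton]
      exact ⟨fun h => le_antisymm h (hmin ▸ hηS s), fun h => h.le⟩
    rw [hs, Finset.sum_singleton, hmin, hαmη]
  · have hlt : ηS < μ := lt_of_le_of_ne (hηS μ) (Ne.symm hmin)
    have hne : (Finset.univ.filter (· < μ)).Nonempty := ⟨ηS, by simp [hlt]⟩
    set μ' := (Finset.univ.filter (· < μ)).max' hne with hμ'
    have hμ'μ : μ' < μ := by
      have := Finset.max'_mem _ hne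
      rw [Finset.mem_filter] at this
      exact this.2
    have hcov : μ' ⋖ μ := by
      refine ⟨hμ'μ, fun z hz1 hz2 => ?_⟩
      exact absurd (Finset.le_max' _ z (by simp [hz2])) (not_le.mpr hz1)
    have hset : Finset.univ.filter (· ≤ μ) = insert μ (Finset.univ.filter (· ≤ μ')) := by
      ext z
      simp only [Finset.mem_insert, Finset.mem_filter, Finset.mem_univ, true_and]
      constructor
      · intro hz
        rcases eq_or_lt_of_le hz with h | h
        · exact Or.inl h
        · exact Or.inr (Finset.le_max' _ z (by simp [h]))
      · rintro (rfl | hz)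
        · exact le_rfl
        · exact hz.trans hμ'μ.le
    rw [hset, Finset.sum_insert (by simp [not_le.mpr hμ'μ]), IH μ' hμ'μ,
      hcomp μ' μ hcov, add_comm, Jf_trans]

end Helpers

variable {n : ℕ} {Sig : Fin n → Type*} [∀ i, Fintype (Sig i)] [∀ i, LinearOrder (Sig i)]

/-- `c_σ = c + Σ_{q=1}^n (-1)^q Σ_{I = {i_1<⋯<i_q}} Σ_{λ : σ_{i_j} < λ_{i_j} ∀ j} g_{I,λ}`,
the Chern character of the component sheaf `E_σ` of a locally abelian parabolic bundle,
computed via the Koszul-style resolution.  Here `λ` runs over multi-indices of covers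
(risers) `λ_i` of `Σ_i` for `i ∈ I` with `σ_i ≤ m_-(λ_i)`. -/
def cSigma (c : A) (g : ∀ I : Finset (Fin n), ((i : I) → Sig i.1 × Sig i.1) → A)
    (σ : ∀ i, Sig i) : A :=
  c + ∑ I ∈ Finset.univ.filter (fun I : Finset (Fin n) => I.Nonempty),
        (-1 : A) ^ I.card *
          ∑ lam ∈ Finset.univ.filter
              (fun lam : (i : I) → Sig i.1 × Sig i.1 =>
                ∀ i : I, (lam i).1 ⋖ (lam i).2 ∧ σ i.1 ≤ (lam i).1),
            g I lam

/-- The parabolic Chern character, given by the Iyer–Simpson integral formula evaluated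
formally: `chPar = (∏_i J(0,1,D_i))⁻¹ Σ_{σ} c_σ ∏_i J(α_-(σ_i), α_+(σ_i), D_i)`. -/
def chPar (D : Fin n → A) (αm αp : ∀ i, Sig i → ℝ) (c : A)
    (g : ∀ I : Finset (Fin n), ((i : I) → Sig i.1 × Sig i.1) → A) : A :=
  Ring.inverse (∏ i, Jf 0 1 (D i)) *
    ∑ σ : ∀ i, Sig i, cSigma c g σ * ∏ i, Jf (αm i (σ i)) (αp i (σ i)) (D i)

section MainTheorem
open Finset
set_option maxHeartbeats 1000000 in
/-- Theorem 3.10 (`maintheorem`): under the Grothendieck–Riemann–Roch relation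
`g_{I,λ} = (∏_j J(0,1,D_{i_j})) h_{I,λ}` and the twist relation `c_{(η_1,…,η_n)} e^{D} = c`,
the parabolic Chern character satisfies
`ch^{Par}(E) = ch^{Vb}(E)
  - e^{D} Σ_q (-1)^q Σ_I Σ_λ ∏_j (1 - e^{-D_{i_j}})/D_{i_j} ⬝ ξ_{I*}(ch Gr^I_λ)
  + e^{D} Σ_q (-1)^q Σ_I Σ_λ ∏_j (1 - e^{-(α_{i_j}(λ_{i_j})+1) D_{i_j}})/D_{i_j}
      ⬝ ξ_{I*}(ch Gr^I_λ)`. -/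
theorem chPar_eq_maintheorem
    {A : Type*} [CommRing A] [Algebra ℝ A]
    {n : ℕ} (hn : 1 ≤ n)
    {Sig : Fin n → Type*} [∀ i, Fintype (Sig i)] [∀ i, LinearOrder (Sig i)]
    [∀ i, Nontrivial (Sig i)]
    (D : Fin n → A) (hD : ∀ i, IsNilpotent (D i))
    (η τ : ∀ i, Sig i) (hη : ∀ i σ, η i ≤ σ) (hτ : ∀ i σ, σ ≤ τ i)
    (α : ∀ i, Sig i × Sig i → ℝ)
    (hα : ∀ i p, p.1 ⋖ p.2 → α i p ∈ Set.Ioc (-1 : ℝ) 0)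
    (hαmono : ∀ i (p p' : Sig i × Sig i),
        p.1 ⋖ p.2 → p'.1 ⋖ p'.2 → p.1 ≤ p'.1 → α i p ≤ α i p')
    (αp αm : ∀ i, Sig i → ℝ)
    (hαpτ : ∀ i, αp i (τ i) = 0)
    (hαpc : ∀ i (σ σ' : Sig i), σ ⋖ σ' → αp i σ = α i (σ, σ'))
    (hαmη : ∀ i, αm i (η i) = -1)
    (hαmc : ∀ i (σ σ' : Sig i), σ ⋖ σ' → αm i σ' = α i (σ, σ'))
    (c : A)
    (g hh : ∀ I : Finset (Fin n), ((i : I) → Sig i.1 × Sig i.1) → A)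
    (hGRR : ∀ (I : Finset (Fin n)), I.Nonempty →
        ∀ lam : (i : I) → Sig i.1 × Sig i.1, (∀ i : I, (lam i).1 ⋖ (lam i).2) →
          g I lam = (∏ i : I, Jf 0 1 (D i.1)) * hh I lam)
    (htwist : cSigma c g (fun i => η i) * nexp (∑ i, D i) = c) :
    chPar D αm αp c g =
      c -
        nexp (∑ i, D i) *
          ∑ I ∈ Finset.univ.filter (fun I : Finset (Fin n) => I.Nonempty),
            (-1 : A) ^ I.card *
              ∑ lam ∈ Finset.univ.filter
                  (fun lam : (i : I) → Sig i.1 × Sig i.1 =>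
                    ∀ i : I, (lam i).1 ⋖ (lam i).2),
                (∏ i : I, Jf 0 1 (D i.1)) * hh I lam +
        nexp (∑ i, D i) *
          ∑ I ∈ Finset.univ.filter (fun I : Finset (Fin n) => I.Nonempty),
            (-1 : A) ^ I.card *
              ∑ lam ∈ Finset.univ.filter
                  (fun lam : (i : I) → Sig i.1 × Sig i.1 =>
                    ∀ i : I, (lam i).1 ⋖ (lam i).2),
                (∏ i : I, Jf 0 (α i.1 (lam i) + 1) (D i.1)) * hh I lam := by
  rcases subsingleton_or_nontrivial A with hA | hA
  · exact Subsingleton.elim _ _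
  -- notation
  set E : A := nexp (∑ i, D i) with hE
  set P : A := ∏ i, Jf 0 1 (D i) with hP
  set filt : Finset (Finset (Fin n)) :=
    Finset.univ.filter (fun I : Finset (Fin n) => I.Nonempty) with hfilt
  set T : ∀ I : Finset (Fin n), Finset ((i : I) → Sig i.1 × Sig i.1) :=
    fun I => Finset.univ.filter
      (fun lam : (i : I) → Sig i.1 × Sig i.1 => ∀ i : I, (lam i).1 ⋖ (lam i).2) with hT
  set U : A := ∑ I ∈ filt, (-1 : A) ^ I.card *
      ∑ lam ∈ T I, (∏ i : I, Jf 0 1 (D i.1)) * hh I lam with hU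
  set V : A := ∑ I ∈ filt, (-1 : A) ^ I.card *
      ∑ lam ∈ T I, (∏ i : I, Jf 0 (α i.1 (lam i) + 1) (D i.1)) * hh I lam with hV
  have hcomp : ∀ i (s s' : Sig i), s ⋖ s' → αp i s = αm i s' :=
    fun i s s' h => (hαpc i s s' h).trans (hαmc i s s' h).symm
  have hpart : ∀ i (μ : Sig i),
      ∑ σi ∈ Finset.univ.filter (· ≤ μ), Jf (αm i σi) (αp i σi) (D i)
        = Jf (-1) (αp i μ) (D i) :=
    fun i μ => sum_le_Jf (D i) (αm i) (αp i) (η i) (hη i) (hαmη i) (hcomp i) μ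
  have hfull : ∀ i, ∑ σi : Sig i, Jf (αm i σi) (αp i σi) (D i) = Jf (-1) 0 (D i) := by
    intro i
    have huniv : (Finset.univ : Finset (Sig i)) = Finset.univ.filter (· ≤ τ i) := by
      ext s; simp [hτ i s]
    rw [huniv, hpart i (τ i), hαpτ i]
  have hEP : ∀ i, Jf (-1) 0 (D i) = nexp (D i) * Jf 0 1 (D i) := by
    intro i
    have := Jf_shift (hD i) 0
    rwa [zero_add] at this
  have hnexpprod : (∏ i, nexp (D i)) = E := by
    rw [hE]
    exact (nexp_sum Finset.univ D fun i _ => hD i).symm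
  -- the W computation
  have hW : ∀ (I : Finset (Fin n)) (lam : (i : I) → Sig i.1 × Sig i.1),
      (∀ i : I, (lam i).1 ⋖ (lam i).2) →
      ∑ σ ∈ Finset.univ.filter (fun σ : ∀ i, Sig i => ∀ i : I, σ i.1 ≤ (lam i).1),
        ∏ i, Jf (αm i (σ i)) (αp i (σ i)) (D i)
      = E * ((∏ i : I, Jf 0 (α i.1 (lam i) + 1) (D i.1)) * ∏ i ∈ Iᶜ, Jf 0 1 (D i)) := by
    intro I lam hlam
    set t : ∀ i : Fin n, Finset (Sig i) := fun i =>
      if h : i ∈ I then Finset.univ.filter (· ≤ (lam ⟨i, h⟩).1) else Finset.univ with ht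
    have hset : Finset.univ.filter (fun σ : ∀ i, Sig i => ∀ i : I, σ i.1 ≤ (lam i).1)
        = Fintype.piFinset t := by
      ext σ
      simp only [Finset.mem_filter, Finset.mem_univ, true_and, Fintype.mem_piFinset]
      constructor
      · intro h i
        by_cases hi : i ∈ I
        · simp only [t, dif_pos hi, Finset.mem_filter, Finset.mem_univ, true_and]
          exact h ⟨i, hi⟩
        · simp [t, dif_neg hi]
      · intro h i
        have hh2 := h i.1
        simp only [t, dif_pos i.2, Finset.mem_filter, Finset.mem_univ, true_and] at hh2
        exact hh2
    rw [hset, ← Finset.prod_univ_sum t (fun i x => Jf (αm i x) (αp i x) (D i))]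
    set β : Fin n → ℝ := fun i => if h : i ∈ I then α i (lam ⟨i, h⟩) else 0 with hβ
    have hti : ∀ i, ∑ x ∈ t i, Jf (αm i x) (αp i x) (D i) = Jf (-1) (β i) (D i) := by
      intro i
      by_cases hi : i ∈ I
      · rw [show t i = Finset.univ.filter (· ≤ (lam ⟨i, hi⟩).1) from by simp [t, dif_pos hi]]
        rw [hpart i _]
        congr 1
        rw [hβ]
        simp only [dif_pos hi]
        exact hαpc i _ _ (hlam ⟨i, hi⟩)
      · rw [show t i = Finset.univ from by simp [t, dif_neg hi], hfull i, hβ]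
        simp [hi]
    rw [Finset.prod_congr rfl fun i _ => hti i,
      Finset.prod_congr rfl fun i _ => Jf_shift (hD i) (β i),
      Finset.prod_mul_distrib, hnexpprod]
    congr 1
    rw [← Finset.prod_mul_prod_compl I (fun i => Jf 0 (β i + 1) (D i))]
    congr 1
    · rw [← Finset.prod_coe_sort I (fun i => Jf 0 (β i + 1) (D i))]
      refine Finset.prod_congr rfl fun i _ => ?_
      have : β i.1 = α i.1 (lam i) := by
        rw [hβ]
        simp only [dif_pos i.2]
      rw [this]
    · refine Finset.prod_congr rfl fun i hi => ?_
      have : β i = 0 := by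
        rw [hβ]
        simp [Finset.mem_compl.mp hi]
      rw [this, zero_add]
  -- the big sum
  have hS : ∑ σ : ∀ i, Sig i, cSigma c g σ * ∏ i, Jf (αm i (σ i)) (αp i (σ i)) (D i)
      = E * P * (c + V) := by
    have expand : ∀ σ : ∀ i, Sig i,
        cSigma c g σ * ∏ i, Jf (αm i (σ i)) (αp i (σ i)) (D i)
          = c * ∏ i, Jf (αm i (σ i)) (αp i (σ i)) (D i)
            + (∑ I ∈ filt, (-1 : A) ^ I.card *
                ∑ lam ∈ Finset.univ.filter
                    (fun lam : (i : I) → Sig i.1 × Sig i.1 =>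
                      ∀ i : I, (lam i).1 ⋖ (lam i).2 ∧ σ i.1 ≤ (lam i).1),
                  g I lam) * ∏ i, Jf (αm i (σ i)) (αp i (σ i)) (D i) := by
      intro σ
      rw [cSigma, add_mul, hfilt]
    rw [Finset.sum_congr rfl fun σ _ => expand σ, Finset.sum_add_distrib]
    have part1 : ∑ σ : ∀ i, Sig i, c * ∏ i, Jf (αm i (σ i)) (αp i (σ i)) (D i)
        = c * (E * P) := by
      rw [← Finset.mul_sum]
      congr 1
      have hps := Finset.prod_univ_sum (fun i : Fin n => (Finset.univ : Finset (Sig i)))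
        (fun i x => Jf (αm i x) (αp i x) (D i))
      rw [Fintype.piFinset_univ] at hps
      rw [← hps, Finset.prod_congr rfl fun i _ => hfull i,
        Finset.prod_congr rfl fun i _ => hEP i, Finset.prod_mul_distrib, hnexpprod, ← hP]
    have part2 : ∑ σ : ∀ i, Sig i,
        (∑ I ∈ filt, (-1 : A) ^ I.card *
            ∑ lam ∈ Finset.univ.filter
                (fun lam : (i : I) → Sig i.1 × Sig i.1 =>
                  ∀ i : I, (lam i).1 ⋖ (lam i).2 ∧ σ i.1 ≤ (lam i).1),
              g I lam) * ∏ i, Jf (αm i (σ i)) (αp i (σ i)) (D i)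
        = E * P * V := by
      rw [Finset.sum_congr rfl fun σ (_ : σ ∈ Finset.univ) => Finset.sum_mul ..]
      rw [Finset.sum_comm]
      have inner : ∀ I ∈ filt,
          ∑ σ : ∀ i, Sig i, ((-1 : A) ^ I.card *
              ∑ lam ∈ Finset.univ.filter
                  (fun lam : (i : I) → Sig i.1 × Sig i.1 =>
                    ∀ i : I, (lam i).1 ⋖ (lam i).2 ∧ σ i.1 ≤ (lam i).1),
                g I lam) * ∏ i, Jf (αm i (σ i)) (αp i (σ i)) (D i)
            = (-1 : A) ^ I.card * (E * P *
                ∑ lam ∈ T I, (∏ i : I, Jf 0 (α i.1 (lam i) + 1) (D i.1)) * hh I lam) := by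
        intro I hI
        have hI' : I.Nonempty := by
          rw [hfilt] at hI
          simpa using hI
        have hfsplit : ∀ σ : ∀ i, Sig i,
            Finset.univ.filter
                (fun lam : (i : I) → Sig i.1 × Sig i.1 =>
                  ∀ i : I, (lam i).1 ⋖ (lam i).2 ∧ σ i.1 ≤ (lam i).1)
              = (T I).filter (fun lam => ∀ i : I, σ i.1 ≤ (lam i).1) := by
          intro σ
          rw [hT, Finset.filter_filter]
          apply Finset.filter_congr
          intro lam _
          exact ⟨fun h => ⟨fun i => (h i).1, fun i => (h i).2⟩,
            fun h i => ⟨h.1 i, h.2 i⟩⟩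
        have perlam : ∀ lam ∈ T I,
            ∑ σ : ∀ i, Sig i, (if (∀ i : I, σ i.1 ≤ (lam i).1) then g I lam else 0) *
                ∏ i, Jf (αm i (σ i)) (αp i (σ i)) (D i)
              = E * P * ((∏ i : I, Jf 0 (α i.1 (lam i) + 1) (D i.1)) * hh I lam) := by
          intro lam hlam
          have hcov : ∀ i : I, (lam i).1 ⋖ (lam i).2 := by
            rw [hT] at hlam
            simpa using hlam
          have hstep : ∀ σ : ∀ i, Sig i,
              (if (∀ i : I, σ i.1 ≤ (lam i).1) then g I lam else 0) *
                  ∏ i, Jf (αm i (σ i)) (αp i (σ i)) (D i)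
                = if (∀ i : I, σ i.1 ≤ (lam i).1) then
                    g I lam * ∏ i, Jf (αm i (σ i)) (αp i (σ i)) (D i) else 0 := by
            intro σ
            rw [ite_mul, zero_mul]
          rw [Finset.sum_congr rfl fun σ _ => hstep σ, ← Finset.sum_filter,
            ← Finset.mul_sum, hW I lam hcov, hGRR I hI' lam hcov]
          have hPsplit : (∏ i : I, Jf 0 1 (D i.1)) * ∏ i ∈ Iᶜ, Jf 0 1 (D i) = P := by
            rw [hP, ← Finset.prod_mul_prod_compl I (fun i => Jf 0 1 (D i))]
            congr 1
            exact Finset.prod_coe_sort I (fun i => Jf 0 1 (D i))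
          linear_combination
            (E * (∏ i : I, Jf 0 (α i.1 (lam i) + 1) (D i.1)) * hh I lam) * hPsplit
        calc ∑ σ : ∀ i, Sig i, ((-1 : A) ^ I.card *
              ∑ lam ∈ Finset.univ.filter
                  (fun lam : (i : I) → Sig i.1 × Sig i.1 =>
                    ∀ i : I, (lam i).1 ⋖ (lam i).2 ∧ σ i.1 ≤ (lam i).1),
                g I lam) * ∏ i, Jf (αm i (σ i)) (αp i (σ i)) (D i)
            = (-1 : A) ^ I.card * ∑ σ : ∀ i, Sig i,
                (∑ lam ∈ T I, if (∀ i : I, σ i.1 ≤ (lam i).1) then g I lam else 0) *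
                  ∏ i, Jf (αm i (σ i)) (αp i (σ i)) (D i) := by
              rw [Finset.mul_sum]
              refine Finset.sum_congr rfl fun σ _ => ?_
              rw [hfsplit σ, Finset.sum_filter, mul_assoc]
          _ = (-1 : A) ^ I.card * ∑ lam ∈ T I, ∑ σ : ∀ i, Sig i,
                (if (∀ i : I, σ i.1 ≤ (lam i).1) then g I lam else 0) *
                  ∏ i, Jf (αm i (σ i)) (αp i (σ i)) (D i) := by
              congr 1
              rw [Finset.sum_congr rfl fun σ (_ : σ ∈ Finset.univ) => Finset.sum_mul ..]
              exact Finset.sum_comm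
          _ = (-1 : A) ^ I.card * ∑ lam ∈ T I,
                E * P * ((∏ i : I, Jf 0 (α i.1 (lam i) + 1) (D i.1)) * hh I lam) := by
              congr 1
              exact Finset.sum_congr rfl perlam
          _ = (-1 : A) ^ I.card * (E * P *
                ∑ lam ∈ T I, (∏ i : I, Jf 0 (α i.1 (lam i) + 1) (D i.1)) * hh I lam) := by
              congr 1
              rw [Finset.mul_sum]
      rw [Finset.sum_congr rfl inner, hV, Finset.mul_sum]
      refine Finset.sum_congr rfl fun I _ => ?_
      ring
    rw [part1, part2]
    ring
  have hPunit : IsUnit P := by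
    rw [hP]
    refine Finset.prod_induction _ IsUnit (fun a b => IsUnit.mul) isUnit_one ?_
    exact fun i _ => Jf_isUnit (hD i)
  have hchpar : chPar D αm αp c g = E * (c + V) := by
    rw [chPar, hS, ← hP, show E * P * (c + V) = P * (E * (c + V)) by ring, ← mul_assoc,
      Ring.inverse_mul_cancel P hPunit, one_mul]
  -- twist
  have hceta : cSigma c g (fun i => η i) = c + U := by
    rw [cSigma, hU]
    congr 1
    refine Finset.sum_congr rfl fun I hI => ?_
    have hI' : I.Nonempty := by
      rw [hfilt] at hI
      simpa using hI
    congr 1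
    have hfeq : Finset.univ.filter
        (fun lam : (i : I) → Sig i.1 × Sig i.1 =>
          ∀ i : I, (lam i).1 ⋖ (lam i).2 ∧ η i.1 ≤ (lam i).1) = T I := by
      rw [hT]
      apply Finset.filter_congr
      intro lam _
      exact ⟨fun h i => (h i).1, fun h i => ⟨h i, hη _ _⟩⟩
    rw [hfeq]
    refine Finset.sum_congr rfl fun lam hlam => ?_
    refine hGRR I hI' lam ?_
    rw [hT] at hlam
    simpa using hlam
  have htwist2 : E * c = c - E * U := by
    rw [hceta] at htwist
    linear_combination htwist
  rw [hchpar, mul_add, htwist2]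

end MainTheorem
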